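/- arXiv:math/9804137 — 2 statements merged into one kernel-verified Lean document; each statement's English description precedes it below -/
import Mathlib

section
/- Let S be a closed subset of the n-dimensional torus T^n = ℝ^n/ℤ^n such that for every x ∈ S and every positive integer m, m•x ∈ S. Then S is a finite union of closed subgroups of T^n. -/
/-!
Every closed subgroup `K` of `T^n` has an open neighbourhood `U` such that a point all of whose
positive multiples lie in `U` belongs to `K`. Indeed, the preimage of `K` in `ℝ^n` agrees near `0`
with the largest linear subspace `V` it contains, so for `y` close to `K` the distance from `y` to
`K` is the distance in `ℝ^n` from a short lift of `y - k` to `V`; hence it doubles when `y` is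
doubled, and a point of positive distance is pushed out of `U` by some multiple `2^i`.

The closed subgroups contained in `S` form a compact subset of the space of nonempty compact
subsets of `T^n` (Vietoris topology). Finitely many of the open sets `{C | C ⊆ U_K}` cover it,
say those of `K₁, …, K_r`. For `x ∈ S` the closed subgroup generated by `x` is the closure of the
positive multiples of `x`, so it lies in `S`, hence inside some `U_{K_i}`, and then `x ∈ K_i`.
-/

open Filter Metric Set Topology TopologicalSpace Pointwise

section CompactGroup

variable {X : Type*} [TopologicalSpace X]

theorem TopologicalSpace.NonemptyCompacts.isClosed_setOf_subset [T2Space X] :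
    IsClosed {p : NonemptyCompacts X × NonemptyCompacts X | (p.1 : Set X) ⊆ p.2} := by
  refine isOpen_compl_iff.1 (isOpen_iff_forall_mem_open.2 fun p hp => ?_)
  obtain ⟨a, ha₁, ha₂⟩ := not_subset.1 hp
  obtain ⟨U, V, hU, hV, haU, hV₂, hUV⟩ := SeparatedNhds.of_isCompact_isCompact
    isCompact_singleton p.2.isCompact (disjoint_singleton_left.2 ha₂)
  refine ⟨{K : NonemptyCompacts X | ((K : Set X) ∩ U).Nonempty} ×ˢ
    {K : NonemptyCompacts X | (K : Set X) ⊆ V}, ?_,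
    (NonemptyCompacts.isOpen_inter_nonempty_of_isOpen hU).prod
      (NonemptyCompacts.isOpen_subsets_of_isOpen hV), ⟨⟨a, ha₁, haU rfl⟩, hV₂⟩⟩
  rintro q ⟨⟨b, hb₁, hbU⟩, hq₂⟩ hq
  exact hUV.notMem_of_mem_left hbU (hq₂ (hq hb₁))

variable [AddGroup X] [IsTopologicalAddGroup X]

theorem TopologicalSpace.NonemptyCompacts.isClosed_setOf_sub_mem [T2Space X] :
    IsClosed {C : NonemptyCompacts X | ∀ a ∈ C, ∀ b ∈ C, a - b ∈ C} := by
  have hsub : Continuous fun C : NonemptyCompacts X =>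
      ((C ×ˢ C).map (fun p : X × X => p.1 - p.2) continuous_sub, C) := by
    fun_prop
  convert NonemptyCompacts.isClosed_setOf_subset.preimage hsub using 1
  ext C
  simp only [mem_ofPred_eq, NonemptyCompacts.coe_map, NonemptyCompacts.coe_prod,
    mem_preimage, image_subset_iff, prod_subset_iff, SetLike.mem_coe]

theorem topologicalClosure_zmultiples_subset [CompactSpace X] {S : Set X} (hS : IsClosed S)
    {x : X} (hx : ∀ m : ℕ, 0 < m → m • x ∈ S) :
    ((AddSubgroup.zmultiples x).topologicalClosure : Set X) ⊆ S := fun _ hy =>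
  hS.mem_of_mapClusterPt (mapClusterPt_atTop_nsmul_iff_mem_topologicalClosure_zmultiples.2 hy)
    ((eventually_gt_atTop 0).mono hx)

theorem IsClosed.exists_finset_addSubgroup_eq_biUnion [CompactSpace X] [T2Space X]
    (hX : ∀ K : AddSubgroup X, IsClosed (K : Set X) →
      ∃ U, IsOpen U ∧ (K : Set X) ⊆ U ∧
        ∀ x, (∀ m : ℕ, 0 < m → m • x ∈ U) → x ∈ K)
    {S : Set X} (hS : IsClosed S) (hmul : ∀ x ∈ S, ∀ m : ℕ, 0 < m → m • x ∈ S) :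
    ∃ 𝒢 : Finset (AddSubgroup X),
      (∀ G ∈ 𝒢, IsClosed (G : Set X)) ∧ S = ⋃ G ∈ 𝒢, (G : Set X) := by
  classical
  set 𝒳 := {C : NonemptyCompacts X | (C : Set X) ⊆ S ∧ ∀ a ∈ C, ∀ b ∈ C, a - b ∈ C}
  have h𝒳 : IsCompact 𝒳 := ((NonemptyCompacts.isClosed_subsets_of_isClosed hS).inter
    NonemptyCompacts.isClosed_setOf_sub_mem).isCompact
  have hK : ∀ C ∈ 𝒳, ∃ K : AddSubgroup X, (K : Set X) = C := fun C hC =>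
    ⟨.ofSub C C.nonempty fun a ha b hb => sub_eq_add_neg a b ▸ hC.2 a ha b hb, rfl⟩
  choose! K hKC using hK
  have hU : ∀ C ∈ 𝒳, ∃ U, IsOpen U ∧ (C : Set X) ⊆ U ∧
      ∀ x, (∀ m : ℕ, 0 < m → m • x ∈ U) → x ∈ K C := fun C hC => by
    simpa only [hKC C hC] using hX (K C) (hKC C hC ▸ C.isCompact.isClosed)
  choose! U hUo hCU hUK using hU
  obtain ⟨t, ht𝒳, hcover⟩ := h𝒳.elim_nhds_subcover (fun C => {C' | (C' : Set X) ⊆ U C})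
    fun C hC => (NonemptyCompacts.isOpen_subsets_of_isOpen (hUo C hC)).mem_nhds (hCU C hC)
  refine ⟨t.image K, ?_, subset_antisymm (fun x hx => ?_) ?_⟩
  · simp only [Finset.mem_image, forall_exists_index, and_imp, forall_apply_eq_imp_iff₂]
    exact fun C hC => hKC C (ht𝒳 C hC) ▸ C.isCompact.isClosed
  · set G := (AddSubgroup.zmultiples x).topologicalClosure
    have hG : (⟨⟨G, (AddSubgroup.isClosed_topologicalClosure _).isCompact⟩,
        ⟨0, G.zero_mem⟩⟩ : NonemptyCompacts X) ∈ 𝒳 :=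
      ⟨topologicalClosure_zmultiples_subset hS (hmul x hx), fun _ ha _ hb => G.sub_mem ha hb⟩
    obtain ⟨C, hCt, hGC⟩ := mem_iUnion₂.1 (hcover hG)
    have hxC := hUK C (ht𝒳 C hCt) x fun m _ => hGC <|
      (AddSubgroup.zmultiples x).le_topologicalClosure (nsmul_mem (AddSubgroup.mem_zmultiples x) m)
    exact mem_biUnion (Finset.mem_image_of_mem K hCt) hxC
  · simp only [Finset.mem_image, iUnion_exists, biUnion_and', iUnion_iUnion_eq_right,
      iUnion_subset_iff]
    exact fun C hC => hKC C (ht𝒳 C hC) ▸ (ht𝒳 C hC).1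

end CompactGroup

namespace AddSubgroup

variable {E : Type*} [NormedAddCommGroup E] [NormedSpace ℝ E]

def maxSubmodule (G : AddSubgroup E) : Submodule ℝ E where
  carrier := {v | ∀ t : ℝ, t • v ∈ G}
  add_mem' ha hb t := by simpa only [smul_add] using add_mem (ha t) (hb t)
  zero_mem' t := by simpa only [smul_zero] using zero_mem G
  smul_mem' c v hv t := by simpa only [smul_smul] using hv (t * c)

theorem maxSubmodule_le (G : AddSubgroup E) : G.maxSubmodule.toAddSubgroup ≤ G :=
  fun v hv => by simpa using hv 1

variable {G : AddSubgroup E}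

theorem mem_maxSubmodule_of_tendsto (hG : IsClosed (G : Set E)) {y : ℕ → E} {u : E}
    (hyG : ∀ j, y j ∈ G) (hy0 : ∀ j, y j ≠ 0) (hy : Tendsto (‖y ·‖) atTop (𝓝 0))
    (hu : Tendsto (fun j => ‖y j‖⁻¹ • y j) atTop (𝓝 u)) :
    u ∈ G.maxSubmodule := fun t => by
  have hpos j : 0 < ‖y j‖ := norm_pos_iff.2 (hy0 j)
  -- the multiples `⌊t / ‖y j‖⌋ • y j ∈ G` converge to `t • u`
  have hfloor : Tendsto (fun j => (⌊t / ‖y j‖⌋ : ℝ) * ‖y j‖) atTop (𝓝 t) := by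
    refine tendsto_sub_nhds_zero_iff.1 (squeeze_zero_norm (fun j => ?_) hy)
    have h₁ := (le_div_iff₀ (hpos j)).1 (Int.floor_le (t / ‖y j‖))
    have h₂ := (div_lt_iff₀ (hpos j)).1 (Int.lt_floor_add_one (t / ‖y j‖))
    rw [Real.norm_eq_abs, abs_le]
    constructor <;> nlinarith
  refine hG.mem_of_tendsto (hfloor.smul hu) (Eventually.of_forall fun j => ?_)
  rw [smul_smul, mul_assoc, mul_inv_cancel₀ (hpos j).ne', mul_one, Int.cast_smul_eq_zsmul]
  exact zsmul_mem (hyG j) _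

variable [FiniteDimensional ℝ E]

theorem eventually_eq_zero_of_maxSubmodule_eq_bot (hG : IsClosed (G : Set E))
    (hV : G.maxSubmodule = ⊥) : ∀ᶠ g in 𝓝 (0 : E), g ∈ G → g = 0 := by
  by_contra h
  obtain ⟨y, hy, hyG⟩ := frequently_iff_seq_forall.1 (not_eventually.1 h)
  simp only [Classical.not_imp] at hyG
  have hsphere j : ‖y j‖⁻¹ • y j ∈ sphere (0 : E) 1 := by
    simp [norm_smul, (hyG j).2]
  obtain ⟨u, hu, φ, hφ, hlim⟩ := (isCompact_sphere (0 : E) 1).tendsto_subseq hsphere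
  have huV := mem_maxSubmodule_of_tendsto hG (fun j => (hyG (φ j)).1) (fun j => (hyG (φ j)).2)
    ((tendsto_norm_zero.comp hy).comp hφ.tendsto_atTop) hlim
  simp [hV] at huV
  simp [huV] at hu

theorem eventually_mem_maxSubmodule (hG : IsClosed (G : Set E)) :
    ∀ᶠ g in 𝓝 (0 : E), g ∈ G → g ∈ G.maxSubmodule := by
  -- `G ∩ W` is discrete for a complement `W`, and the projection onto `W` maps `G` into it
  obtain ⟨W, hW⟩ := Submodule.exists_isCompl G.maxSubmodule
  set p := W.projection G.maxSubmodule hW.symm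
  have hD : IsClosed ((G ⊓ W.toAddSubgroup : AddSubgroup E) : Set E) :=
    hG.inter W.closed_of_finiteDimensional
  have hDV : (G ⊓ W.toAddSubgroup).maxSubmodule = ⊥ := by
    refine (Submodule.eq_bot_iff _).2 fun u hu => ?_
    have huV : u ∈ G.maxSubmodule := fun t => (hu t).1
    have huW : u ∈ W := by simpa using (hu 1).2
    exact (Submodule.disjoint_def.1 hW.disjoint) u huV huW
  have hp : Tendsto p (𝓝 0) (𝓝 0) := by
    simpa using (LinearMap.continuous_of_finiteDimensional p).tendsto 0
  filter_upwards [hp.eventually (eventually_eq_zero_of_maxSubmodule_eq_bot hD hDV)] with g hg hgG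
  have hgp : g - p g ∈ G.maxSubmodule := Submodule.sub_projection_mem hW.symm g
  have hpg : p g = 0 :=
    hg ⟨by simpa using sub_mem hgG (G.maxSubmodule_le hgp), Submodule.projection_apply_mem _ g⟩
  simpa [hpg] using hgp

end AddSubgroup

theorem AddSubgroup.infDist_add_right {α : Type*} [SeminormedAddCommGroup α]
    (K : AddSubgroup α) {k : α} (hk : k ∈ K) (y : α) : infDist (y + k) K = infDist y K := by
  have hK : (· + k) '' (K : Set α) = K := by
    ext x; simp [Set.image_add_right, K.add_mem_cancel_right (K.neg_mem hk)]
  simpa [hK] using infDist_image (x := y) (t := (K : Set α)) (isometry_add_right k)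

theorem Submodule.infDist_smul {E : Type*} [NormedAddCommGroup E] [NormedSpace ℝ E]
    (V : Submodule ℝ E) {c : ℝ} (hc : c ≠ 0) (z : E) :
    infDist (c • z) V = ‖c‖ * infDist z V := by
  have hV : c • (V : Set E) = V := by
    ext x; simp [Set.mem_smul_set_iff_inv_smul_mem₀ hc, V.smul_mem_iff (inv_ne_zero hc)]
  simpa [hV] using infDist_smul₀ hc (V : Set E) z

theorem nonpos_of_forall_nsmul_lt {M : Type*} [AddMonoid M] {f : M → ℝ} {r : ℝ}
    (hf : ∀ y, f y < r → f (2 • y) = 2 * f y) {x : M}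
    (hx : ∀ m : ℕ, 0 < m → f (m • x) < r) :
    f x ≤ 0 := by
  have hpow (i : ℕ) : f (2 ^ i • x) = 2 ^ i * f x := by
    induction i with
    | zero => simp
    | succ i ih => rw [pow_succ, mul_nsmul, hf _ (hx _ (by positivity)), ih]; ring
  by_contra! h
  obtain ⟨i, hi⟩ := pow_unbounded_of_one_lt (r / f x) one_lt_two
  have := hx (2 ^ i) (by positivity)
  rw [hpow] at this
  rw [div_lt_iff₀ h] at hi
  linarith

section Torus

variable {n : ℕ}

local notation "𝕋" n:max => Fin n → AddCircle (1 : ℝ)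

noncomputable def torusProj (n : ℕ) : (Fin n → ℝ) →+ 𝕋 n :=
  (QuotientAddGroup.mk' _).compLeft (Fin n)

theorem continuous_torusProj : Continuous (torusProj n) :=
  continuous_pi fun i => (AddCircle.continuous_mk' 1).comp (continuous_apply i)

theorem norm_torusProj_le (z : Fin n → ℝ) : ‖torusProj n z‖ ≤ ‖z‖ :=
  (pi_norm_le_iff_of_nonneg (norm_nonneg z)).2 fun i =>
    QuotientAddGroup.norm_mk_le_norm.trans (norm_le_pi_norm z i)

theorem exists_torusProj_eq_norm_le (x : 𝕋 n) :
    ∃ z, torusProj n z = x ∧ ‖z‖ ≤ ‖x‖ := by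
  have hlift (c : AddCircle (1 : ℝ)) :
      ∃ r : ℝ, (r : AddCircle (1 : ℝ)) = c ∧ |r| ≤ ‖c‖ := by
    obtain ⟨a, rfl⟩ := QuotientAddGroup.mk_surjective c
    exact ⟨a - round a, by simp, by simp [AddCircle.norm_eq]⟩
  choose r hr hrx using hlift
  exact ⟨fun i => r (x i), funext fun i => hr (x i),
    (pi_norm_le_iff_of_nonneg (norm_nonneg x)).2 fun i =>
      (hrx (x i)).trans (norm_le_pi_norm x i)⟩

variable {K : AddSubgroup (𝕋 n)}

theorem exists_pos_infDist_torusProj_eq (hK : IsClosed (K : Set (𝕋 n))) :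
    ∃ r > 0, ∀ z, ‖z‖ < r →
      infDist (torusProj n z) K = infDist z (K.comap (torusProj n)).maxSubmodule := by
  set G := K.comap (torusProj n)
  obtain ⟨r, hr, hrV⟩ :=
    Metric.eventually_nhds_iff.1 <|
      G.eventually_mem_maxSubmodule (hK.preimage continuous_torusProj)
  refine ⟨r / 2, half_pos hr, fun z hz => le_antisymm ?_ ?_⟩
  · obtain ⟨v, hv, hdv⟩ := G.maxSubmodule.closed_of_finiteDimensional.exists_infDist_eq_dist
      ⟨0, zero_mem _⟩ z
    calc infDist (torusProj n z) K ≤ dist (torusProj n z) (torusProj n v) :=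
          infDist_le_dist_of_mem (G.maxSubmodule_le hv)
      _ ≤ dist z v := by simpa [dist_eq_norm, ← map_sub] using norm_torusProj_le (z - v)
      _ = _ := hdv.symm
  · obtain ⟨k, hk, hdk⟩ :=
      hK.isCompact.exists_infDist_eq_dist ⟨0, K.zero_mem⟩ (torusProj n z)
    obtain ⟨w, hw, hwn⟩ := exists_torusProj_eq_norm_le (torusProj n z - k)
    have hkz : ‖torusProj n z - k‖ ≤ ‖z‖ := by
      calc ‖torusProj n z - k‖ = infDist (torusProj n z) K := by rw [hdk, dist_eq_norm]
        _ ≤ dist (torusProj n z) 0 := infDist_le_dist_of_mem K.zero_mem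
        _ ≤ ‖z‖ := (dist_zero_right _).trans_le (norm_torusProj_le z)
    have hzw : z - w ∈ G.maxSubmodule := by
      refine hrV ?_ (show torusProj n (z - w) ∈ K by simpa [hw])
      rw [dist_zero_right]
      linarith [norm_sub_le z w]
    calc infDist z G.maxSubmodule ≤ dist z (z - w) := infDist_le_dist_of_mem hzw
      _ ≤ ‖torusProj n z - k‖ := by simpa [dist_eq_norm] using hwn
      _ = infDist (torusProj n z) K := by rw [hdk, dist_eq_norm]

theorem exists_pos_infDist_two_nsmul_eq (hK : IsClosed (K : Set (𝕋 n))) :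
    ∃ r > 0, ∀ y : 𝕋 n, infDist y K < r → infDist (2 • y) K = 2 * infDist y K := by
  obtain ⟨r, hr, hloc⟩ := exists_pos_infDist_torusProj_eq hK
  refine ⟨r / 2, half_pos hr, fun y hy => ?_⟩
  obtain ⟨k, hk, hdk⟩ := hK.isCompact.exists_infDist_eq_dist ⟨0, K.zero_mem⟩ y
  obtain ⟨z, hz, hzn⟩ := exists_torusProj_eq_norm_le (y - k)
  have hzr : ‖z‖ < r / 2 := hzn.trans_lt (by rwa [← dist_eq_norm, ← hdk])
  have hy : infDist y K = infDist (torusProj n z) K := by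
    rw [hz, sub_eq_add_neg, K.infDist_add_right (K.neg_mem hk)]
  have h2y : torusProj n ((2 : ℝ) • z) = 2 • y + 2 • -k := by
    rw [two_smul, map_add, hz, two_nsmul, two_nsmul]; abel
  calc infDist (2 • y) K = infDist (torusProj n ((2 : ℝ) • z)) K := by
        rw [h2y, K.infDist_add_right (K.nsmul_mem (K.neg_mem hk) 2)]
    _ = 2 * infDist y K := by
        rw [hloc _ (by rw [norm_smul]; norm_num; linarith), Submodule.infDist_smul _ two_ne_zero,
          ← hloc z (by linarith), hy]
        norm_num

theorem exists_isOpen_forall_nsmul_mem_imp_mem (hK : IsClosed (K : Set (𝕋 n))) :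
    ∃ U, IsOpen U ∧ (K : Set (𝕋 n)) ⊆ U ∧
      ∀ x, (∀ m : ℕ, 0 < m → m • x ∈ U) → x ∈ K := by
  obtain ⟨r, hr, hdouble⟩ := exists_pos_infDist_two_nsmul_eq hK
  refine ⟨thickening r K, isOpen_thickening, self_subset_thickening hr _, fun x hx => ?_⟩
  have hx0 : infDist x K ≤ 0 := nonpos_of_forall_nsmul_lt hdouble fun m hm =>
    (mem_thickening_iff_infDist_lt ⟨0, K.zero_mem⟩).1 (hx m hm)
  exact (hK.mem_iff_infDist_zero ⟨0, K.zero_mem⟩).2 (le_antisymm hx0 infDist_nonneg)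

end Torus

/-- Lawrence's theorem (Corollary 1.B): a closed subset of the torus `T^n` stable under
positive integer multiples is a finite union of closed subgroups. -/
theorem lawrence_closed_full_is_finite_union_of_closed_subgroups
    (n : ℕ) (S : Set (Fin n → AddCircle (1:ℝ))) (hS : IsClosed S)
    (hfull : ∀ x ∈ S, ∀ m : ℕ, 0 < m → (m • x) ∈ S) :
    ∃ 𝒢 : Finset (AddSubgroup (Fin n → AddCircle (1:ℝ))),
      (∀ G ∈ 𝒢, IsClosed (G : Set (Fin n → AddCircle (1:ℝ)))) ∧
      S = ⋃ G ∈ 𝒢, (G : Set (Fin n → AddCircle (1:ℝ))) :=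
  hS.exists_finset_addSubgroup_eq_biUnion (fun _ => exists_isOpen_forall_nsmul_mem_imp_mem) hfull
end

section
/- For n ≥ 3, the set S of elements A in SO(n) satisfying A² = Id is a closed subset of SO(n) that is stable under taking positive integer powers (A ∈ S implies A^m ∈ S for all m ≥ 1), but S is not a finite union of closed subgroups of SO(n). -/
/-!
If the involutions formed a finite union of subgroups, each of these would consist of
involutions and hence be abelian, so by pigeonhole there could not be infinitely many pairwise
noncommuting involutions. But for `n ≥ 3` the group
`SO(n)` has infinitely many pairwise noncommuting involutions: the half-turns about the axes
`(cos (θ/2), sin (θ/2), 0)`, `0 < θ < π`, in the first three coordinates, extended by the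
identity. Two of them multiply to the rotations by `±(θ - φ)` about the third axis, depending
on the order, so they commute only if `sin (θ - φ) = 0`.
-/

/-- `SO n` as the subgroup of the real orthogonal group consisting of matrices of
determinant one. -/
def SO (n : ℕ) : Subgroup ↥(Matrix.orthogonalGroup (Fin n) ℝ) where
  carrier := {A | (A : Matrix (Fin n) (Fin n) ℝ).det = 1}
  one_mem' := by simp
  mul_mem' := by
    intro a b ha hb
    simp only [Set.mem_setOf_eq, Submonoid.coe_mul, Matrix.det_mul] at *
    rw [ha, hb, mul_one]
  inv_mem' := by
    intro a ha
    simp only [Set.mem_setOf_eq] at *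
    have : ((a⁻¹ : ↥(Matrix.orthogonalGroup (Fin n) ℝ)) : Matrix (Fin n) (Fin n) ℝ)
        = star (a : Matrix (Fin n) (Fin n) ℝ) := rfl
    rw [this, Matrix.star_eq_conjTranspose, Matrix.det_conjTranspose, ha, star_one]

open Matrix Real

theorem Subgroup.commute_of_forall_sq_eq_one {G : Type*} [Group G] {H : Subgroup G}
    (hH : ∀ x ∈ H, x ^ 2 = 1) {a b : G} (ha : a ∈ H) (hb : b ∈ H) : Commute a b :=
  (Commute.of_orderOf_dvd_two (fun g : H ↦ orderOf_dvd_of_pow_eq_one (Subtype.ext (hH g g.2)))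
    ⟨a, ha⟩ ⟨b, hb⟩).map H.subtype

theorem setOf_sq_eq_one_ne_biUnion {G ι : Type*} [Group G] [Infinite ι] {f : ι → G}
    (hf : ∀ i, f i ^ 2 = 1) (hcomm : Pairwise fun i j ↦ ¬Commute (f i) (f j))
    (𝒢 : Finset (Subgroup G)) : {x : G | x ^ 2 = 1} ≠ ⋃ H ∈ 𝒢, (H : Set G) := by
  intro h𝒢
  have hcover : ∀ i, ∃ H ∈ 𝒢, f i ∈ H := fun i ↦ by
    have : f i ∈ ⋃ H ∈ 𝒢, (H : Set G) := h𝒢 ▸ hf i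
    simpa using this
  choose H hH𝒢 hH using hcover
  obtain ⟨i, j, hij, hHij⟩ :=
    Finite.exists_ne_map_eq_of_infinite fun i ↦ (⟨H i, hH𝒢 i⟩ : 𝒢)
  have hsq : ∀ x ∈ H i, x ^ 2 = 1 := fun x hx ↦ by
    change x ∈ {x : G | x ^ 2 = 1}
    rw [h𝒢]
    exact Set.mem_biUnion (hH𝒢 i) hx
  have hj : f j ∈ H i := (Subtype.mk.inj hHij).symm ▸ hH j
  exact hcomm hij (Subgroup.commute_of_forall_sq_eq_one hsq (hH i) hj)

namespace Matrix

variable {m p n : Type*} (R : Type*) [Fintype m] [Fintype p] [Fintype n] [DecidableEq m]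
  [DecidableEq p] [DecidableEq n] [CommRing R] (e : m ⊕ p ≃ n)

def fromBlocksOneHom : Matrix m m R →* Matrix n n R where
  toFun A := reindex e e (fromBlocks A 0 0 1)
  map_one' := by simp [fromBlocks_one]
  map_mul' A B := by simp [fromBlocks_multiply]

variable {R}

theorem fromBlocksOneHom_injective : Function.Injective (fromBlocksOneHom R e) :=
  fun _ _ h ↦ (fromBlocks_inj.mp ((reindex e e).injective h)).1

theorem det_fromBlocksOneHom (A : Matrix m m R) : (fromBlocksOneHom R e A).det = A.det := by
  simp [fromBlocksOneHom]

theorem transpose_fromBlocksOneHom (A : Matrix m m R) :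
    (fromBlocksOneHom R e A)ᵀ = fromBlocksOneHom R e Aᵀ := by
  simp [fromBlocksOneHom, fromBlocks_transpose]

theorem fromBlocksOneHom_mem_orthogonalGroup {A : Matrix m m R} (hA : A ∈ orthogonalGroup m R) :
    fromBlocksOneHom R e A ∈ orthogonalGroup n R := by
  rw [mem_orthogonalGroup_iff', transpose_fromBlocksOneHom, ← map_mul,
    (mem_orthogonalGroup_iff' _ _).mp hA, map_one]

end Matrix

namespace SO

def blockEmbedding {m n : ℕ} (h : m ≤ n) : SO m →* SO n where
  toFun A :=
    ⟨⟨fromBlocksOneHom ℝ (finSumFinEquiv.trans (finCongr (Nat.add_sub_cancel' h))) A,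
      fromBlocksOneHom_mem_orthogonalGroup _ A.1.2⟩, (det_fromBlocksOneHom _ _).trans A.2⟩
  map_one' := Subtype.ext <| Subtype.ext <| map_one _
  map_mul' _ _ := Subtype.ext <| Subtype.ext <| map_mul _ _ _

theorem blockEmbedding_injective {m n : ℕ} (h : m ≤ n) :
    Function.Injective (blockEmbedding h) :=
  fun _ _ hAB ↦ Subtype.ext <| Subtype.ext <|
    fromBlocksOneHom_injective _ (congrArg (fun A : SO n ↦ A.1.1) hAB)

noncomputable def halfTurnMatrix (θ : ℝ) : Matrix (Fin 3) (Fin 3) ℝ :=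
  !![cos θ, sin θ, 0; sin θ, -cos θ, 0; 0, 0, -1]

theorem halfTurnMatrix_mul (θ φ : ℝ) : halfTurnMatrix θ * halfTurnMatrix φ =
    !![cos (φ - θ), sin (φ - θ), 0; -sin (φ - θ), cos (φ - θ), 0; 0, 0, 1] := by
  rw [cos_sub, sin_sub]
  simp only [halfTurnMatrix, mul_fin_three]
  ring_nf

theorem halfTurnMatrix_mul_self (θ : ℝ) : halfTurnMatrix θ * halfTurnMatrix θ = 1 := by
  simp [halfTurnMatrix_mul, one_fin_three]

theorem transpose_halfTurnMatrix (θ : ℝ) : (halfTurnMatrix θ)ᵀ = halfTurnMatrix θ := by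
  ext i j
  fin_cases i <;> fin_cases j <;> simp [halfTurnMatrix]

theorem det_halfTurnMatrix (θ : ℝ) : (halfTurnMatrix θ).det = 1 := by
  simp only [halfTurnMatrix, det_fin_three, of_apply, cons_val', cons_val_zero, cons_val_one,
    cons_val, cons_val_fin_one]
  linear_combination cos_sq_add_sin_sq θ

noncomputable def halfTurn (θ : ℝ) : SO 3 :=
  ⟨⟨halfTurnMatrix θ, (mem_orthogonalGroup_iff' _ _).mpr <| by
    rw [transpose_halfTurnMatrix, halfTurnMatrix_mul_self]⟩, det_halfTurnMatrix θ⟩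

theorem halfTurn_sq (θ : ℝ) : halfTurn θ ^ 2 = 1 :=
  Subtype.ext <| Subtype.ext <| (pow_two _).trans (halfTurnMatrix_mul_self θ)

theorem sin_sub_eq_zero_of_commute_halfTurn {θ φ : ℝ} (h : Commute (halfTurn θ) (halfTurn φ)) :
    sin (φ - θ) = 0 := by
  have h01 := congrArg (fun A : SO 3 ↦ (A : Matrix (Fin 3) (Fin 3) ℝ) 0 1) h.eq
  simp only [halfTurn, Subgroup.coe_mul, Submonoid.mk_mul_mk, halfTurnMatrix_mul, of_apply,
    cons_val', cons_val_one, cons_val_zero, cons_val_fin_one] at h01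
  rw [← neg_sub φ, sin_neg] at h01
  linarith

theorem pairwise_not_commute_halfTurn :
    Pairwise fun θ φ : Set.Ioo 0 π ↦ ¬Commute (halfTurn θ) (halfTurn φ) := by
  rintro ⟨θ, hθ0, hθπ⟩ ⟨φ, hφ0, hφπ⟩ hθφ h
  have hsub := (sin_eq_zero_iff_of_lt_of_lt (by linarith) (by linarith)).mp
    (sin_sub_eq_zero_of_commute_halfTurn h)
  exact hθφ (Subtype.ext (sub_eq_zero.mp hsub).symm)

end SO

/-- For `n ≥ 3`, the set of involutions in `SO(n)` is closed and stable under positive integer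
powers, but is not a finite union of closed subgroups: Lawrence's theorem fails for
noncommutative compact Lie groups. -/
theorem involutions_in_SO_not_finite_union_of_closed_subgroups
    (n : ℕ) (hn : 3 ≤ n) :
    IsClosed {A : SO n | A ^ 2 = 1} ∧
    (∀ A ∈ {A : SO n | A ^ 2 = 1}, ∀ m : ℕ, 0 < m → A ^ m ∈ {A : SO n | A ^ 2 = 1}) ∧
    ¬ ∃ 𝒢 : Finset (Subgroup (SO n)),
        (∀ G ∈ 𝒢, IsClosed (G : Set (SO n))) ∧
        {A : SO n | A ^ 2 = 1} = ⋃ G ∈ 𝒢, (G : Set (SO n)) := by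
  refine ⟨isClosed_eq (continuous_pow 2) continuous_const, fun A hA m _ ↦ ?_, ?_⟩
  · change (A ^ m) ^ 2 = 1
    rw [pow_right_comm, hA, one_pow]
  · rintro ⟨𝒢, -, h𝒢⟩
    have : Infinite (Set.Ioo 0 π) := (Set.Ioo_infinite pi_pos).to_subtype
    refine setOf_sq_eq_one_ne_biUnion
      (f := fun θ : Set.Ioo 0 π ↦ SO.blockEmbedding hn (SO.halfTurn θ))
      (fun θ ↦ by rw [← map_pow, SO.halfTurn_sq, map_one]) (fun θ φ hθφ h ↦ ?_) 𝒢 h𝒢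
    exact SO.pairwise_not_commute_halfTurn hθφ
      ((commute_map_iff (SO.blockEmbedding_injective hn)).mp h)
end
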